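/- For each \(k \ge 0\), the set \(X_n^{(k)}\) of permutations of \(\mathfrak{S}_n\) having at most \(k\) consecutive pairs of left-to-right minima (with sentinel 0) is a lower ideal of the left weak order, and \(|X_n^{(k)}|\) equals the number of permutations of \(\mathfrak{S}_n\) with at most \(k\) fixed points, i.e., \(\sum_{j=0}^{k} d_{n,j}\). -/

import Mathlib

open Equiv

variable {n : ℕ}

/-- The one-line word of `σ` extended by the sentinel `0`. -/
def word (σ : Perm (Fin n)) (i : ℕ) : ℕ :=
  if h : i < n then ((σ ⟨i, h⟩ : ℕ) + 1) else 0

/-- Position `i` of `σ·0` is a left-to-right minimum. -/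
def IsLRMin (σ : Perm (Fin n)) (i : ℕ) : Prop :=
  ∀ j < i, word σ i < word σ j

/-- The number of adjacent pairs of positions of `σ·0` that are both LR-minima. -/
noncomputable def pairCount (σ : Perm (Fin n)) : ℕ :=
  Set.ncard {i : ℕ | i + 1 ≤ n ∧ IsLRMin σ i ∧ IsLRMin σ (i + 1)}

/-- The number of inversions of `σ`. -/
noncomputable def invCount (σ : Perm (Fin n)) : ℕ :=
  Nat.card {p : Fin n × Fin n // p.1 < p.2 ∧ σ p.2 < σ p.1}

/-- Covering relation of the left weak order. -/
def WeakCover (σ τ : Perm (Fin n)) : Prop :=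
  ∃ (i : ℕ) (h : i + 1 < n),
    τ = Equiv.swap (⟨i, Nat.lt_of_succ_lt h⟩ : Fin n) ⟨i + 1, h⟩ * σ ∧
    invCount τ = invCount σ + 1

/-- The left weak order on `𝔖_n`. -/
def WeakLe (π σ : Perm (Fin n)) : Prop := Relation.ReflTransGen WeakCover π σ

/-- The number of permutations of `{1,…,n}` with exactly `j` fixed points. -/
noncomputable def fixCount (n j : ℕ) : ℕ :=
  Nat.card {σ : Perm (Fin n) // Nat.card {i : Fin n // σ i = i} = j}

/-!
Foata's transformation `φ` cuts `σ` before each left-to-right minimum and reads the factors as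
cycles. A cycle of length one is a factor consisting of a single LR-minimum followed by another
LR-minimum (or by the sentinel `0`), so the fixed points of `φ(σ)` are in bijection with the
consecutive LR-minima pairs of `σ`. `φ` is injective because `σ` is read back from `φ(σ)`:
after a cycle closes, the word continues with the largest cycle minimum below the current
prefix minimum. So `φ` matches the permutations with at most `k` pairs with those with at most
`k` fixed points.

A cover `σ ⋖ s_i σ` of the left weak order exchanges the values `i` and `i + 1`, where `i`
stands to the left of `i + 1` in `σ`. This exchange keeps every LR-minimum of `σ`, so the
number of consecutive pairs can only grow upwards in the weak order.
-/

section LRMin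

variable (σ : Perm (Fin n))

lemma word_of_lt {i : ℕ} (hi : i < n) : word σ i = σ ⟨i, hi⟩ + 1 := dif_pos hi

lemma word_of_le {i : ℕ} (hi : n ≤ i) : word σ i = 0 := dif_neg hi.not_gt

instance : DecidablePred (IsLRMin σ) := fun i => by unfold IsLRMin; infer_instance

lemma isLRMin_zero : IsLRMin σ 0 := fun _ hj => absurd hj (Nat.not_lt_zero _)

lemma isLRMin_length : IsLRMin σ n := fun j hj => by
  rw [word_of_le σ le_rfl, word_of_lt σ hj]; omega

lemma not_isLRMin_of_length_lt {i : ℕ} (hi : n < i) : ¬IsLRMin σ i := fun h => by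
  have := h n hi
  rw [word_of_le σ le_rfl, word_of_le σ hi.le] at this
  exact lt_irrefl 0 this

lemma isLRMin_iff_of_lt {i : ℕ} (hi : i < n) :
    IsLRMin σ i ↔ ∀ j (hj : j < i), σ ⟨i, hi⟩ < σ ⟨j, hj.trans hi⟩ := by
  refine forall_congr' fun j => forall_congr' fun hj => ?_
  rw [word_of_lt σ hi, word_of_lt σ (hj.trans hi), Fin.lt_def]
  omega

lemma apply_le_apply_iff_of_isLRMin {p q : Fin n} (hp : IsLRMin σ p) (hq : IsLRMin σ q) :
    σ p ≤ σ q ↔ q ≤ p := by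
  rcases lt_trichotomy p q with hpq | rfl | hpq
  · exact iff_of_false ((isLRMin_iff_of_lt σ q.2).1 hq p hpq).not_ge hpq.not_ge
  · simp
  · exact iff_of_true ((isLRMin_iff_of_lt σ p.2).1 hp q hpq).le hpq.le

end LRMin

section FactorStart

variable (σ : Perm (Fin n))

/-- The first position of the factor containing `r`, when `σ·0` is cut before each
LR-minimum. -/
def factorStart (r : ℕ) : ℕ := Nat.findGreatest (IsLRMin σ) r

lemma factorStart_le (r : ℕ) : factorStart σ r ≤ r := Nat.findGreatest_le r

lemma factorStart_lt (r : Fin n) : factorStart σ r < n := (factorStart_le σ r).trans_lt r.2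

lemma isLRMin_factorStart (r : ℕ) : IsLRMin σ (factorStart σ r) :=
  Nat.findGreatest_spec (Nat.zero_le r) (isLRMin_zero σ)

lemma le_factorStart {p r : ℕ} (hpr : p ≤ r) (hp : IsLRMin σ p) : p ≤ factorStart σ r :=
  Nat.le_findGreatest hpr hp

lemma not_isLRMin_of_factorStart_lt {p r : ℕ} (h : factorStart σ r < p) (hpr : p ≤ r) :
    ¬IsLRMin σ p :=
  Nat.findGreatest_is_greatest h hpr

lemma factorStart_eq_self {r : ℕ} (h : IsLRMin σ r) : factorStart σ r = r :=
  (factorStart_le σ r).antisymm (le_factorStart σ le_rfl h)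

lemma factorStart_succ {r : ℕ} (h : ¬IsLRMin σ (r + 1)) :
    factorStart σ (r + 1) = factorStart σ r := by
  rw [factorStart, Nat.findGreatest_succ, if_neg h, factorStart]

lemma word_factorStart_le {r : ℕ} : ∀ j ≤ r, word σ (factorStart σ r) ≤ word σ j := by
  intro j
  induction j using Nat.strong_induction_on with
  | _ j ih =>
    intro hjr
    by_contra! hlt
    rcases lt_trichotomy j (factorStart σ r) with hj | rfl | hj
    · exact (isLRMin_factorStart σ r j hj).not_gt hlt
    · exact lt_irrefl _ hlt
    · exact not_isLRMin_of_factorStart_lt σ hj hjr fun i hi =>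
        hlt.trans_le (ih i hi (hi.le.trans hjr))

end FactorStart

section FactorCycle

variable (σ : Perm (Fin n))

lemma succ_lt_of_not_isLRMin (r : Fin n) (h : ¬IsLRMin σ (r + 1)) : (r : ℕ) + 1 < n :=
  lt_of_le_of_ne r.2 fun hn => h (by rw [hn]; exact isLRMin_length σ)

/-- The factors of `σ`, read as cycles of positions. -/
def factorCycleFun (r : Fin n) : Fin n :=
  if h : IsLRMin σ (r + 1) then ⟨factorStart σ r, factorStart_lt σ r⟩
  else ⟨r + 1, succ_lt_of_not_isLRMin σ r h⟩

lemma factorCycleFun_of_isLRMin {r : Fin n} (h : IsLRMin σ (r + 1)) :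
    factorCycleFun σ r = ⟨factorStart σ r, factorStart_lt σ r⟩ := dif_pos h

lemma factorCycleFun_of_not_isLRMin {r : Fin n} (h : ¬IsLRMin σ (r + 1)) :
    factorCycleFun σ r = ⟨r + 1, succ_lt_of_not_isLRMin σ r h⟩ := dif_neg h

lemma factorCycleFun_injective : Function.Injective (factorCycleFun σ) := by
  have key : ∀ r s : Fin n, IsLRMin σ (r + 1) → IsLRMin σ (s + 1) → r < s →
      factorStart σ r ≠ factorStart σ s := fun r s hr _ hrs h =>
    ((le_factorStart σ hrs hr).trans_eq h.symm).not_gt (Nat.lt_succ_of_le (factorStart_le σ r))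
  intro r s h
  by_cases hr : IsLRMin σ (r + 1) <;> by_cases hs : IsLRMin σ (s + 1)
  · rw [factorCycleFun_of_isLRMin σ hr, factorCycleFun_of_isLRMin σ hs, Fin.mk.injEq] at h
    rcases lt_trichotomy r s with hrs | hrs | hrs
    exacts [absurd h (key r s hr hs hrs), hrs, absurd h.symm (key s r hs hr hrs)]
  · rw [factorCycleFun_of_isLRMin σ hr, factorCycleFun_of_not_isLRMin σ hs, Fin.mk.injEq] at h
    exact absurd (h ▸ isLRMin_factorStart σ r) hs
  · rw [factorCycleFun_of_not_isLRMin σ hr, factorCycleFun_of_isLRMin σ hs, Fin.mk.injEq] at h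
    exact absurd (h ▸ isLRMin_factorStart σ s) hr
  · rw [factorCycleFun_of_not_isLRMin σ hr, factorCycleFun_of_not_isLRMin σ hs, Fin.mk.injEq] at h
    exact Fin.ext (Nat.succ_injective h)

noncomputable def factorCycle : Perm (Fin n) :=
  Equiv.ofBijective _ (Finite.injective_iff_bijective.1 (factorCycleFun_injective σ))

lemma factorCycle_apply (r : Fin n) : factorCycle σ r = factorCycleFun σ r := rfl

lemma factorCycle_apply_eq_self_iff (r : Fin n) :
    factorCycle σ r = r ↔ IsLRMin σ r ∧ IsLRMin σ (r + 1) := by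
  rw [factorCycle_apply]
  by_cases h : IsLRMin σ (r + 1)
  · rw [factorCycleFun_of_isLRMin σ h, Fin.ext_iff, and_iff_left h]
    exact ⟨fun he => by rw [← he]; exact isLRMin_factorStart σ r, factorStart_eq_self σ⟩
  · rw [factorCycleFun_of_not_isLRMin σ h, Fin.ext_iff]
    simp [h]

lemma factorStart_factorCycle (r : Fin n) :
    factorStart σ (factorCycle σ r) = factorStart σ r := by
  rw [factorCycle_apply]
  by_cases h : IsLRMin σ (r + 1)
  · rw [factorCycleFun_of_isLRMin σ h]
    exact factorStart_eq_self σ (isLRMin_factorStart σ r)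
  · rw [factorCycleFun_of_not_isLRMin σ h]
    exact factorStart_succ σ h

lemma sameCycle_factorStart (r : Fin n) :
    (factorCycle σ).SameCycle ⟨factorStart σ r, factorStart_lt σ r⟩ r := by
  obtain ⟨r, hr⟩ := r
  induction r with
  | zero => simp only [Nat.le_zero.1 (factorStart_le σ 0)]; rfl
  | succ r ih =>
    by_cases h : IsLRMin σ (r + 1)
    · simp only [factorStart_eq_self σ h]; rfl
    · have hnext : factorCycle σ ⟨r, by omega⟩ = ⟨r + 1, hr⟩ :=
        factorCycleFun_of_not_isLRMin σ h
      simp only [factorStart_succ σ h]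
      have := (ih (by omega)).apply_right
      rwa [hnext] at this

lemma sameCycle_factorCycle_iff {r s : Fin n} :
    (factorCycle σ).SameCycle r s ↔ factorStart σ r = factorStart σ s := by
  constructor
  · intro h
    obtain ⟨k, rfl⟩ := h.exists_nat_pow_eq
    rw [Perm.coe_pow]
    exact (congrFun (Function.iterate_invariant (g := fun r : Fin n => factorStart σ r)
      (funext (factorStart_factorCycle σ)) k) r).symm
  · intro h
    have hr := sameCycle_factorStart σ r
    have hs := sameCycle_factorStart σ s
    simp only [h] at hr
    exact hr.symm.trans hs

end FactorCycle

def IsCycleMin {α : Type*} [Preorder α] (τ : Perm α) (x : α) : Prop :=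
  ∀ y, τ.SameCycle x y → x ≤ y

section Foata

variable (σ : Perm (Fin n))

/-- Foata's transformation `φ`: the factors of `σ`, read as cycles of values. -/
noncomputable def foata : Perm (Fin n) := σ * factorCycle σ * σ⁻¹

lemma foata_apply_apply (r : Fin n) : foata σ (σ r) = σ (factorCycle σ r) := by
  simp [foata]

lemma sameCycle_foata_apply_apply_iff {p q : Fin n} :
    (foata σ).SameCycle (σ p) (σ q) ↔ (factorCycle σ).SameCycle p q := by
  simp [foata, Perm.sameCycle_conj]

lemma apply_factorStart_le (r : Fin n) : σ ⟨factorStart σ r, factorStart_lt σ r⟩ ≤ σ r := by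
  have := word_factorStart_le σ r le_rfl
  rwa [word_of_lt σ (factorStart_lt σ r), word_of_lt σ r.2, Nat.add_le_add_iff_right] at this

lemma isCycleMin_foata_apply_iff (q : Fin n) : IsCycleMin (foata σ) (σ q) ↔ IsLRMin σ q := by
  constructor
  · intro h
    set s : Fin n := ⟨factorStart σ q, factorStart_lt σ q⟩
    have hqs : σ q ≤ σ s :=
      h _ ((sameCycle_foata_apply_apply_iff σ).2 (sameCycle_factorStart σ q).symm)
    have hsq : s = q := σ.injective (le_antisymm (apply_factorStart_le σ q) hqs)
    rw [← hsq]
    exact isLRMin_factorStart σ q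
  · intro hq y hy
    obtain ⟨p, rfl⟩ := σ.surjective y
    have hstart := (sameCycle_factorCycle_iff σ).1 ((sameCycle_foata_apply_apply_iff σ).1 hy)
    rw [factorStart_eq_self σ hq] at hstart
    simpa [← hstart] using apply_factorStart_le σ p

lemma isGreatest_isCycleMin_foata (hn : 0 < n) :
    IsGreatest {x | IsCycleMin (foata σ) x} (σ ⟨0, hn⟩) := by
  refine ⟨(isCycleMin_foata_apply_iff σ _).2 (isLRMin_zero σ), ?_⟩
  rintro x hx
  obtain ⟨q, rfl⟩ := σ.surjective x
  exact (apply_le_apply_iff_of_isLRMin σ ((isCycleMin_foata_apply_iff σ q).1 hx)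
    (isLRMin_zero σ)).2 (Nat.zero_le _)

/-- How the entry `z` following the value `y` in a word is read off from its Foata image `τ`:
it is `τ y`, unless `τ y` is a cycle minimum, i.e. the cycle of `y` closes there; then the next
cycle opens at the largest cycle minimum below `τ y`. -/
def IsNextEntry {α : Type*} [Preorder α] (τ : Perm α) (y z : α) : Prop :=
  (IsCycleMin τ (τ y) → IsGreatest {x | IsCycleMin τ x ∧ x < τ y} z) ∧
    (¬IsCycleMin τ (τ y) → z = τ y)

lemma IsNextEntry.unique {α : Type*} [PartialOrder α] {τ : Perm α} {y z z' : α}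
    (h : IsNextEntry τ y z) (h' : IsNextEntry τ y z') : z = z' := by
  by_cases hy : IsCycleMin τ (τ y)
  · exact (h.1 hy).unique (h'.1 hy)
  · exact (h.2 hy).trans (h'.2 hy).symm

lemma isNextEntry_foata (r : Fin n) (hr : (r : ℕ) + 1 < n) :
    IsNextEntry (foata σ) (σ r) (σ ⟨r + 1, hr⟩) := by
  rw [IsNextEntry, foata_apply_apply, factorCycle_apply, isCycleMin_foata_apply_iff]
  by_cases hL : IsLRMin σ (r + 1)
  · set s : Fin n := ⟨factorStart σ r, factorStart_lt σ r⟩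
    have hs : IsLRMin σ s := isLRMin_factorStart σ r
    rw [factorCycleFun_of_isLRMin σ hL]
    refine ⟨fun _ => ⟨⟨(isCycleMin_foata_apply_iff σ _).2 hL, ?_⟩, ?_⟩, fun h => absurd hs h⟩
    · rw [← not_le, apply_le_apply_iff_of_isLRMin σ hs hL, not_le, Fin.lt_def]
      exact Nat.lt_succ_of_le (factorStart_le σ r)
    · rintro x ⟨hx, hxs⟩
      obtain ⟨q, rfl⟩ := σ.surjective x
      rw [isCycleMin_foata_apply_iff] at hx
      rw [← not_le, apply_le_apply_iff_of_isLRMin σ hs hx, not_le] at hxs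
      have hrq : (r : ℕ) < q := by
        by_contra! hqr
        exact (le_factorStart σ hqr hx).not_gt hxs
      exact (apply_le_apply_iff_of_isLRMin σ hx hL).2 hrq
  · rw [factorCycleFun_of_not_isLRMin σ hL]
    exact ⟨fun h => absurd h hL, fun _ => rfl⟩

theorem foata_injective : Function.Injective (foata : Perm (Fin n) → Perm (Fin n)) := by
  intro σ π h
  suffices ∀ m (hm : m < n), σ ⟨m, hm⟩ = π ⟨m, hm⟩ from Equiv.ext fun r => this r r.2
  intro m
  induction m with
  | zero =>
    intro hn
    exact (isGreatest_isCycleMin_foata σ hn).unique (h ▸ isGreatest_isCycleMin_foata π hn)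
  | succ m ih =>
    intro hm
    have hprev := ih (by omega)
    refine (isNextEntry_foata σ ⟨m, by omega⟩ hm).unique ?_
    rw [h, hprev]
    exact isNextEntry_foata π ⟨m, by omega⟩ hm

end Foata

section Count

lemma card_fixedPoints_foata (σ : Perm (Fin n)) :
    Nat.card {x // foata σ x = x} = pairCount σ := by
  have e : {r // factorCycle σ r = r} ≃ {x // foata σ x = x} :=
    σ.subtypeEquiv fun r => by rw [foata_apply_apply, σ.injective.eq_iff]
  rw [pairCount, ← Nat.card_coe_set_eq, ← Nat.card_congr e]
  exact Nat.card_congr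
    { toFun := fun r => ⟨r.1, r.1.2, (factorCycle_apply_eq_self_iff σ r.1).1 r.2⟩
      invFun := fun i => ⟨⟨i, i.2.1⟩, (factorCycle_apply_eq_self_iff σ _).2 i.2.2⟩
      left_inv := fun _ => rfl
      right_inv := fun _ => rfl }

lemma Nat.card_subtype_le_eq_sum {α : Type*} [Finite α] (g : α → ℕ) (k : ℕ) :
    Nat.card {a // g a ≤ k} = ∑ j ∈ Finset.range (k + 1), Nat.card {a // g a = j} := by
  have := Fintype.ofFinite α
  classical
  simp only [Nat.card_eq_fintype_card, Fintype.card_subtype]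
  rw [Finset.card_eq_sum_card_fiberwise (f := g) (t := Finset.range (k + 1))
    fun a ha => Finset.mem_range.2 (Nat.lt_succ_of_le (Finset.mem_filter.1 ha).2)]
  refine Finset.sum_congr rfl fun j hj => ?_
  rw [Finset.filter_filter]
  refine congrArg _ (Finset.filter_congr fun a _ => ⟨And.right, fun h => ⟨?_, h⟩⟩)
  exact h ▸ Nat.le_of_lt_succ (Finset.mem_range.1 hj)

theorem card_pairCount_le (k : ℕ) :
    Nat.card {σ : Perm (Fin n) // pairCount σ ≤ k} =
      ∑ j ∈ Finset.range (k + 1), fixCount n j := by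
  let e := Equiv.ofBijective _ (Finite.injective_iff_bijective.1 (foata_injective (n := n)))
  rw [Nat.card_congr (e.subtypeEquiv (q := fun τ => Nat.card {x // τ x = x} ≤ k) fun σ => by
    rw [Equiv.ofBijective_apply, ← card_fixedPoints_foata σ])]
  exact Nat.card_subtype_le_eq_sum _ k

end Count

section WeakOrder

lemma swap_lt_swap_iff_of_covBy {α : Type*} [LinearOrder α] {a b u v : α} (hab : a ⋖ b)
    (h : ¬(u = a ∧ v = b)) (h' : ¬(u = b ∧ v = a)) : swap a b u < swap a b v ↔ u < v := by
  have key : ∀ {w}, w ≠ a → w ≠ b → (a < w ↔ b < w) ∧ (w < a ↔ w < b) := fun hwa hwb =>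
    ⟨⟨fun hw => (hab.ge_of_gt hw).lt_of_ne' hwb, hab.lt.trans⟩,
      ⟨fun hw => hw.trans hab.lt, fun hw => (hab.le_of_lt hw).lt_of_ne hwa⟩⟩
  rcases eq_or_ne u a with rfl | hua
  · have hvb : v ≠ b := fun hv => h ⟨rfl, hv⟩
    rcases eq_or_ne v u with rfl | hvu
    · simp
    · rw [swap_apply_left, swap_apply_of_ne_of_ne hvu hvb]
      exact (key hvu hvb).1.symm
  rcases eq_or_ne u b with rfl | hub
  · have hva : v ≠ a := fun hv => h' ⟨rfl, hv⟩
    rcases eq_or_ne v u with rfl | hvu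
    · simp
    · rw [swap_apply_right, swap_apply_of_ne_of_ne hva hvu]
      exact (key hva hvu).1
  rw [swap_apply_of_ne_of_ne hua hub]
  rcases eq_or_ne v a with rfl | hva
  · rw [swap_apply_left]
    exact (key hua hub).2.symm
  rcases eq_or_ne v b with rfl | hvb
  · rw [swap_apply_right]
    exact (key hua hub).2
  rw [swap_apply_of_ne_of_ne hva hvb]

variable {σ : Perm (Fin n)} {a b : Fin n}

lemma isLRMin_swap_mul (hab : a ⋖ b) (hσ : σ⁻¹ a < σ⁻¹ b) {m : ℕ} (hm : IsLRMin σ m) :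
    IsLRMin (swap a b * σ) m := by
  rcases lt_trichotomy m n with hmn | rfl | hmn
  · rw [isLRMin_iff_of_lt _ hmn] at hm ⊢
    intro j hj
    refine (swap_lt_swap_iff_of_covBy hab (fun h => ?_) (fun h => ?_)).2 (hm j hj)
    · refine hσ.not_gt ?_
      rw [← h.1, ← h.2]
      simpa using hj
    · exact (hm j hj).not_gt (h.2 ▸ h.1 ▸ hab.lt)
  · exact isLRMin_length _
  · exact absurd hm (not_isLRMin_of_length_lt σ hmn)

lemma invCount_eq_card (σ : Perm (Fin n)) :
    invCount σ = (Finset.univ.filter fun p : Fin n × Fin n => p.1 < p.2 ∧ σ p.2 < σ p.1).card := by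
  rw [invCount, Nat.card_eq_fintype_card, Fintype.card_subtype]

lemma invCount_swap_mul (hab : a ⋖ b) (hσ : σ⁻¹ a < σ⁻¹ b) :
    invCount (swap a b * σ) = invCount σ + 1 := by
  rw [invCount_eq_card, invCount_eq_card, ← Finset.card_insert_of_notMem (a := (σ⁻¹ a, σ⁻¹ b))]
  · congr 1
    ext ⟨x, y⟩
    simp only [Finset.mem_filter, Finset.mem_univ, true_and, Finset.mem_insert, Prod.mk.injEq,
      Perm.eq_inv_iff_eq]
    rw [Perm.mul_apply, Perm.mul_apply]
    by_cases hxy : σ x = a ∧ σ y = b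
    · obtain ⟨hx, hy⟩ := hxy
      simp only [hx, hy, swap_apply_left, swap_apply_right, hab.lt, and_self, true_or, and_true,
        iff_true]
      rw [← Perm.eq_inv_iff_eq] at hx hy
      exact hx ▸ hy ▸ hσ
    by_cases hyx : σ y = a ∧ σ x = b
    · obtain ⟨hy, hx⟩ := hyx
      rw [← Perm.eq_inv_iff_eq] at hx hy
      subst hx hy
      refine iff_of_false (fun h => hσ.not_gt h.1) ?_
      rintro (h | h)
      · exact hab.ne' (by simpa using h.1)
      · exact hσ.not_gt h.1
    rw [swap_lt_swap_iff_of_covBy hab hyx (by tauto)]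
    simp [hxy]
  · simp [hab.lt.not_gt]


lemma WeakCover.exists_swap {σ τ : Perm (Fin n)} (h : WeakCover σ τ) :
    ∃ a b : Fin n, a ⋖ b ∧ σ⁻¹ a < σ⁻¹ b ∧ τ = swap a b * σ := by
  obtain ⟨i, hi, rfl, hinv⟩ := h
  set a : Fin n := ⟨i, Nat.lt_of_succ_lt hi⟩
  set b : Fin n := ⟨i + 1, hi⟩
  have hab : a ⋖ b := Fin.covBy_iff.2 (Order.covBy_add_one i)
  refine ⟨a, b, hab, ?_, rfl⟩
  by_contra! hba
  have hlt : (swap a b * σ)⁻¹ a < (swap a b * σ)⁻¹ b := by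
    simpa [hba.lt_of_ne] using hba.lt_of_ne (σ⁻¹.injective.ne hab.ne')
  have := invCount_swap_mul hab hlt
  rw [← mul_assoc, swap_mul_self, one_mul, hinv] at this
  omega

lemma pairCount_le_of_weakCover {σ τ : Perm (Fin n)} (h : WeakCover σ τ) :
    pairCount σ ≤ pairCount τ := by
  obtain ⟨a, b, hab, hσ, rfl⟩ := h.exists_swap
  refine Set.ncard_le_ncard (fun i hi => ⟨hi.1, isLRMin_swap_mul hab hσ hi.2.1,
    isLRMin_swap_mul hab hσ hi.2.2⟩) ((Set.finite_Iio n).subset fun i hi => hi.1)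

lemma pairCount_le_of_weakLe {σ τ : Perm (Fin n)} (h : WeakLe σ τ) :
    pairCount σ ≤ pairCount τ := by
  induction h with
  | refl => exact le_rfl
  | tail _ hcover ih => exact ih.trans (pairCount_le_of_weakCover hcover)

end WeakOrder

/-- The set `X_n^{(k)}` of permutations with at most `k` adjacent pairs of LR-minima in
`σ·0` is a lower ideal of the left weak order, and its cardinality is the number
`∑_{j=0}^k d_{n,j}` of permutations with at most `k` fixed points. -/
theorem stmt_12 (n k : ℕ) :
    (∀ σ π : Perm (Fin n), pairCount σ ≤ k → WeakLe π σ → pairCount π ≤ k) ∧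
    Nat.card {σ : Perm (Fin n) // pairCount σ ≤ k} =
      ∑ j ∈ Finset.range (k + 1), fixCount n j :=
  ⟨fun _ _ hσ hπσ => (pairCount_le_of_weakLe hπσ).trans hσ, card_pairCount_le k⟩
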